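/- arXiv:0806.1092 — 3 statements merged into one kernel-verified Lean document; each statement's English description precedes it below -/
import Mathlib

section
/- (Deterministic Robbins–Siegmund) Let {u_k}, {v_k}, {w_k} be nonnegative real sequences and {q_k} a nonnegative sequence with ∑ q_k < ∞ and ∑ w_k < ∞. If u_{k+1} ≤ (1 + q_k) u_k - v_k + w_k for all k, then {u_k} converges and ∑ v_k < ∞. -/
/-!
Since `u_{k+1} ≤ (1 + q_k) u_k + w_k`, the sequence `u` stays below `exp (∑ q) (u_0 + ∑ w)`, so the
perturbation `w_k + q_k u_k` is summable. The recursion then says that `u_k + ∑_{j<k} v_j` decreases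
up to that summable perturbation, hence converges; as both of its parts are nonnegative, this gives
the summability of `v` and the convergence of `u`.
-/

open Finset Filter Topology

theorem le_prod_one_add_mul_add_sum {u q w : ℕ → ℝ} (hq : ∀ k, 0 ≤ q k) (hw : ∀ k, 0 ≤ w k)
    (hrec : ∀ k, u (k + 1) ≤ (1 + q k) * u k + w k) (k : ℕ) :
    u k ≤ (∏ j ∈ range k, (1 + q j)) * (u 0 + ∑ j ∈ range k, w j) := by
  induction k with
  | zero => simp
  | succ k ih =>
    have hprod : 1 ≤ ∏ j ∈ range (k + 1), (1 + q j) :=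
      one_le_prod fun j _ ↦ le_add_of_nonneg_right (hq j)
    calc u (k + 1) ≤ (1 + q k) * u k + w k := hrec k
      _ ≤ (1 + q k) * ((∏ j ∈ range k, (1 + q j)) * (u 0 + ∑ j ∈ range k, w j)) + w k := by
          gcongr
          linarith [hq k]
      _ = (∏ j ∈ range (k + 1), (1 + q j)) * (u 0 + ∑ j ∈ range k, w j) + w k := by
          rw [prod_range_succ]; ring
      _ ≤ (∏ j ∈ range (k + 1), (1 + q j)) * (u 0 + ∑ j ∈ range k, w j)
            + (∏ j ∈ range (k + 1), (1 + q j)) * w k := by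
          gcongr
          exact le_mul_of_one_le_left (hw k) hprod
      _ = (∏ j ∈ range (k + 1), (1 + q j)) * (u 0 + ∑ j ∈ range (k + 1), w j) := by
          rw [sum_range_succ]; ring

theorem le_exp_tsum_mul_of_succ_le {u q w : ℕ → ℝ} (hu₀ : 0 ≤ u 0) (hq : ∀ k, 0 ≤ q k)
    (hw : ∀ k, 0 ≤ w k) (hqs : Summable q) (hws : Summable w)
    (hrec : ∀ k, u (k + 1) ≤ (1 + q k) * u k + w k) (k : ℕ) :
    u k ≤ Real.exp (∑' j, q j) * (u 0 + ∑' j, w j) := by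
  have hprod : ∏ j ∈ range k, (1 + q j) ≤ Real.exp (∑' j, q j) :=
    (Real.prod_one_add_le_exp_sum _ hq).trans
      (Real.exp_le_exp.2 (hqs.sum_le_tsum _ fun j _ ↦ hq j))
  have hsum : ∑ j ∈ range k, w j ≤ ∑' j, w j := hws.sum_le_tsum _ fun j _ ↦ hw j
  calc u k ≤ (∏ j ∈ range k, (1 + q j)) * (u 0 + ∑ j ∈ range k, w j) :=
        le_prod_one_add_mul_add_sum hq hw hrec k
    _ ≤ Real.exp (∑' j, q j) * (u 0 + ∑' j, w j) := by
        gcongr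
        exact add_nonneg hu₀ (sum_nonneg fun j _ ↦ hw j)

theorem exists_tendsto_of_succ_le_add_of_summable {a g : ℕ → ℝ} (ha : BddBelow (Set.range a))
    (hg : Summable g) (hrec : ∀ k, a (k + 1) ≤ a k + g k) :
    ∃ L, Tendsto a atTop (𝓝 L) := by
  set s : ℕ → ℝ := fun k ↦ a k - ∑ j ∈ range k, g j
  have hG : Tendsto (fun k ↦ ∑ j ∈ range k, g j) atTop (𝓝 (∑' j, g j)) :=
    hg.hasSum.tendsto_sum_nat
  have hs_anti : Antitone s := by
    refine antitone_nat_of_succ_le fun k ↦ ?_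
    simp only [s, sum_range_succ]
    linarith [hrec k]
  have hs_bdd : BddBelow (Set.range s) := by
    obtain ⟨A, hA⟩ := ha
    obtain ⟨B, hB⟩ := hG.bddAbove_range
    refine ⟨A - B, ?_⟩
    rintro _ ⟨k, rfl⟩
    linarith [hA ⟨k, rfl⟩, hB ⟨k, rfl⟩]
  refine ⟨(⨅ k, s k) + ∑' j, g j, ((tendsto_atTop_ciInf hs_anti hs_bdd).add hG).congr ?_⟩
  intro k
  simp only [s, sub_add_cancel]

theorem summable_and_tendsto_of_tendsto_add_sum_range {u v : ℕ → ℝ} {L : ℝ} (hu : ∀ k, 0 ≤ u k)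
    (hv : ∀ k, 0 ≤ v k) (h : Tendsto (fun k ↦ u k + ∑ j ∈ range k, v j) atTop (𝓝 L)) :
    Summable v ∧ Tendsto u atTop (𝓝 (L - ∑' j, v j)) := by
  obtain ⟨B, hB⟩ := h.bddAbove_range
  have hvs : Summable v :=
    summable_of_sum_range_le hv fun k ↦ by linarith [hu k, hB ⟨k, rfl⟩]
  refine ⟨hvs, (h.sub hvs.hasSum.tendsto_sum_nat).congr fun k ↦ ?_⟩
  simp only [add_sub_cancel_right]

/-- Deterministic Robbins–Siegmund lemma. -/
theorem deterministic_robbins_siegmund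
    (u v w q : ℕ → ℝ)
    (hu : ∀ k, 0 ≤ u k) (hv : ∀ k, 0 ≤ v k) (hw : ∀ k, 0 ≤ w k) (hq : ∀ k, 0 ≤ q k)
    (hqs : Summable q) (hws : Summable w)
    (hrec : ∀ k, u (k + 1) ≤ (1 + q k) * u k - v k + w k) :
    (∃ L : ℝ, Filter.Tendsto u Filter.atTop (nhds L)) ∧ Summable v := by
  set C := Real.exp (∑' j, q j) * (u 0 + ∑' j, w j)
  have hu_le : ∀ k, u k ≤ C :=
    le_exp_tsum_mul_of_succ_le (hu 0) hq hw hqs hws fun k ↦ by linarith [hrec k, hv k]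
  have hgs : Summable fun k ↦ w k + q k * u k :=
    (hws.add (hqs.mul_right C)).of_nonneg_of_le
      (fun k ↦ add_nonneg (hw k) (mul_nonneg (hq k) (hu k)))
      fun k ↦ add_le_add_right (mul_le_mul_of_nonneg_left (hu_le k) (hq k)) _
  obtain ⟨L, hL⟩ :=
    exists_tendsto_of_succ_le_add_of_summable (a := fun k ↦ u k + ∑ j ∈ range k, v j)
      ⟨0, by rintro _ ⟨k, rfl⟩; exact add_nonneg (hu k) (sum_nonneg fun j _ ↦ hv j)⟩ hgs
      fun k ↦ by simp only [sum_range_succ]; linarith [hrec k]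
  obtain ⟨hvs, hu_lim⟩ := summable_and_tendsto_of_tendsto_add_sum_range hu hv hL
  exact ⟨⟨_, hu_lim⟩, hvs⟩
end

section
/- Let p ∈ (2/3, 1], γ ∈ (0, 2p-1) with γ ≥ 1-p, a > 0. Define α_k = a/k^p and n(k) = k+1-⌈k^γ⌉. Then ∑_{k=2}^∞ α_{k+1} α_{n(k)+1} (⌈k^γ⌉ - 2) < ∞. -/
/-!
With `x = k + 2`, the three factors are `O(x^(-p))`, `O(x^(-p))` and `O(x^γ)`: the delayed index
`x + 2 - ⌈x^γ⌉` stays above `x / 2` because `γ < 1`. The summand is therefore `O(x^(γ - 2p))`,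
and `γ - 2p < -1` makes this a convergent `p`-series.
-/

open Filter Asymptotics Real

lemma summable_natCast_of_isBigO_rpow {f : ℝ → ℝ} {s : ℝ} (hs : s < -1)
    (hf : f =O[atTop] fun x => x ^ s) : Summable fun n : ℕ => f n :=
  summable_of_isBigO_nat (summable_nat_rpow.mpr hs) (hf.comp_tendsto tendsto_natCast_atTop_atTop)

lemma isBigO_div_rpow_of_const_mul_le {u : ℝ → ℝ} {a c p : ℝ} (hc : 0 < c) (hp : 0 ≤ p)
    (hu : ∀ᶠ x in atTop, c * x ≤ u x) :
    (fun x => a / u x ^ p) =O[atTop] fun x => x ^ (-p) := by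
  refine IsBigO.of_bound (‖a‖ / c ^ p) ?_
  filter_upwards [hu, eventually_gt_atTop 0] with x hux hx
  have hpow : c ^ p * x ^ p ≤ u x ^ p := by
    rw [← mul_rpow hc.le hx.le]
    exact rpow_le_rpow (by positivity) hux hp
  rw [norm_div, norm_of_nonneg (rpow_nonneg ((by positivity : 0 ≤ c * x).trans hux) p),
    norm_of_nonneg (rpow_nonneg hx.le _), rpow_neg hx.le, ← div_eq_mul_inv, div_div]
  exact div_le_div_of_nonneg_left (norm_nonneg a) (by positivity) hpow

lemma eventually_rpow_le_half_self {γ : ℝ} (hγ : γ < 1) :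
    ∀ᶠ x : ℝ in atTop, x ^ γ ≤ x / 2 := by
  have hlim : Tendsto (fun x : ℝ => x ^ (γ - 1)) atTop (nhds 0) := by
    simpa using tendsto_rpow_neg_atTop (sub_pos.mpr hγ)
  filter_upwards [hlim.eventually (eventually_le_nhds one_half_pos), eventually_gt_atTop 0]
    with x hsmall hx
  calc x ^ γ = x ^ (γ - 1) * x := by rw [← rpow_add_one hx.ne', sub_add_cancel]
    _ ≤ 1 / 2 * x := by gcongr
    _ = x / 2 := by ring

lemma eventually_half_le_add_two_sub_natCeil_rpow {γ : ℝ} (hγ : γ < 1) :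
    ∀ᶠ x : ℝ in atTop, 2⁻¹ * x ≤ x + 2 - ⌈x ^ γ⌉₊ := by
  filter_upwards [eventually_rpow_le_half_self hγ, eventually_gt_atTop 0] with x hhalf hx
  have hceil : (⌈x ^ γ⌉₊ : ℝ) < x ^ γ + 1 := Nat.ceil_lt_add_one (rpow_nonneg hx.le γ)
  linarith

lemma isBigO_natCeil_rpow_sub_two {γ : ℝ} (hγ : 0 ≤ γ) :
    (fun x : ℝ => (⌈x ^ γ⌉₊ : ℝ) - 2) =O[atTop] fun x => x ^ γ := by
  refine IsBigO.of_bound 2 ?_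
  filter_upwards [eventually_ge_atTop 1] with x hx
  have hone : 1 ≤ x ^ γ := one_le_rpow hx hγ
  have hceil : (⌈x ^ γ⌉₊ : ℝ) < x ^ γ + 1 := Nat.ceil_lt_add_one (by linarith)
  rw [norm_eq_abs, norm_of_nonneg (by linarith : 0 ≤ x ^ γ), abs_le]
  constructor <;> linarith [Nat.le_ceil (x ^ γ)]

lemma isBigO_delayed_stepsize_product (a : ℝ) {γ p : ℝ} (hp : 0 ≤ p) (hγ0 : 0 ≤ γ)
    (hγ1 : γ < 1) :
    (fun x : ℝ => a / (x + 1) ^ p * (a / (x + 2 - ⌈x ^ γ⌉₊) ^ p) * ((⌈x ^ γ⌉₊ : ℝ) - 2))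
      =O[atTop] fun x => x ^ (γ - 2 * p) := by
  have hnext := isBigO_div_rpow_of_const_mul_le (a := a) one_pos hp
    (Eventually.of_forall fun x => by linarith : ∀ᶠ x : ℝ in atTop, 1 * x ≤ x + 1)
  have hdelayed := isBigO_div_rpow_of_const_mul_le (a := a) (inv_pos.mpr two_pos) hp
    (eventually_half_le_add_two_sub_natCeil_rpow hγ1)
  refine ((hnext.mul hdelayed).mul (isBigO_natCeil_rpow_sub_two hγ0)).congr' .rfl ?_
  filter_upwards [eventually_gt_atTop 0] with x hx
  rw [← rpow_add hx, ← rpow_add hx]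
  ring_nf

theorem summable_delayed_stepsize_product_general
    (a γ p : ℝ) (hp2 : p ≤ 1)
    (hγ0 : 0 < γ) (hγ1 : γ < 2 * p - 1) :
    Summable (fun k : ℕ =>
      (a / (((k : ℝ) + 2) + 1) ^ p) *
        (a / (((k : ℝ) + 2) + 2 - (⌈((k : ℝ) + 2) ^ γ⌉₊ : ℝ)) ^ p) *
        ((⌈((k : ℝ) + 2) ^ γ⌉₊ : ℝ) - 2)) := by
  have hsum := summable_natCast_of_isBigO_rpow (by linarith : γ - 2 * p < -1)
    (isBigO_delayed_stepsize_product a (by linarith) hγ0.le (by linarith))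
  exact_mod_cast (summable_nat_add_iff 2).mpr hsum

/-- Summability of `∑_{k=2}^∞ α_{k+1} α_{n(k)+1} (⌈k^γ⌉ - 2)` where
`α_k = a / k^p` and `n(k) = k + 1 - ⌈k^γ⌉`. -/
theorem summable_delayed_stepsize_product
    (a β γ p : ℝ) (ha : 0 < a)
    (hp1 : 2 / 3 < p) (hp2 : p ≤ 1)
    (hγ0 : 0 < γ) (hγ1 : γ < 2 * p - 1) (hγp : 1 - p ≤ γ) :
    Summable (fun k : ℕ =>
      (a / (((k : ℝ) + 2) + 1) ^ p) *
        (a / (((k : ℝ) + 2) + 2 - (⌈((k : ℝ) + 2) ^ γ⌉₊ : ℝ)) ^ p) *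
        ((⌈((k : ℝ) + 2) ^ γ⌉₊ : ℝ) - 2)) :=
  summable_delayed_stepsize_product_general a γ p hp2 hγ0 hγ1
end

section
/- Let {u_k} be nonnegative random variables adapted to a filtration {F_k}, and {Δ_k} nonnegative F_k-measurable random variables taking values in {0, c} for a constant c > 0, with E[u_{k+1} | F_k] ≤ u_k - Δ_{k+1}. Then with probability 1, Δ_k = 0 for all sufficiently large k. -/
open MeasureTheory

/-! Taking expectations in the recursion gives `c μ(Δₖ₊₁ = c) ≤ E uₖ - E uₖ₊₁`; since `E uₖ ≥ 0`
the sum telescopes, so `∑ μ(Δₖ = c) < ∞` and Borel–Cantelli shows that almost surely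
`Δₖ = c` happens only finitely often. -/

theorem summable_of_le_sub_succ {f a : ℕ → ℝ} (hf : ∀ k, 0 ≤ f k) (ha : ∀ k, 0 ≤ a k)
    (h : ∀ k, f k ≤ a k - a (k + 1)) : Summable f := by
  refine summable_of_sum_range_le hf (c := a 0) fun n => ?_
  calc ∑ i ∈ Finset.range n, f i
      ≤ ∑ i ∈ Finset.range n, (a i - a (i + 1)) := Finset.sum_le_sum fun i _ => h i
    _ = a 0 - a n := Finset.sum_range_sub' a n
    _ ≤ a 0 := sub_le_self _ (ha n)

section Measure

variable {Ω : Type*} {m m0 : MeasurableSpace Ω} {μ : Measure Ω}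

theorem integral_le_sub_integral_of_condExp_le_sub (hm : m ≤ m0) [SigmaFinite (μ.trim hm)]
    {f g h : Ω → ℝ} (hf : Integrable f μ) (hh : Integrable h μ)
    (hle : ∀ᵐ ω ∂μ, μ[g | m] ω ≤ f ω - h ω) :
    ∫ ω, h ω ∂μ ≤ ∫ ω, f ω ∂μ - ∫ ω, g ω ∂μ := by
  have hmono : ∫ ω, μ[g | m] ω ∂μ ≤ ∫ ω, (f ω - h ω) ∂μ :=
    integral_mono_ae integrable_condExp (hf.sub hh) hle
  rw [integral_condExp hm, integral_sub hf hh] at hmono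
  linarith

theorem eq_indicator_of_eq_zero_or_eq {f : Ω → ℝ} {c : ℝ} (hf : ∀ ω, f ω = 0 ∨ f ω = c) :
    f = {ω | f ω = c}.indicator fun _ => c := by
  funext ω
  by_cases hω : f ω = c
  · simp [hω]
  · simpa [hω] using (hf ω).resolve_right hω

theorem ae_eventually_eq_zero_of_summable_integral [IsFiniteMeasure μ] {f : ℕ → Ω → ℝ} {c : ℝ}
    (hc : c ≠ 0) (hf_meas : ∀ k, Measurable (f k)) (hf : ∀ k ω, f k ω = 0 ∨ f k ω = c)
    (hsum : Summable fun k => ∫ ω, f k ω ∂μ) :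
    ∀ᵐ ω ∂μ, ∀ᶠ k in Filter.atTop, f k ω = 0 := by
  set A : ℕ → Set Ω := fun k => {ω | f k ω = c}
  have hA : ∀ k, MeasurableSet (A k) := fun k => hf_meas k (measurableSet_singleton c)
  have hint : ∀ k, ∫ ω, f k ω ∂μ = μ.real (A k) * c := fun k => by
    rw [eq_indicator_of_eq_zero_or_eq (hf k), integral_indicator_const c (hA k), smul_eq_mul]
  have hsumA : Summable fun k => μ.real (A k) := by
    simpa [hint, hc] using hsum.div_const c
  have hA_ne_top : ∑' k, μ (A k) ≠ ⊤ := by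
    rw [tsum_congr fun k => (ofReal_measureReal (μ := μ) (s := A k)).symm,
      ← ENNReal.ofReal_tsum_of_nonneg (fun _ => measureReal_nonneg) hsumA]
    exact ENNReal.ofReal_ne_top
  filter_upwards [ae_eventually_notMem hA_ne_top] with ω hω
  filter_upwards [hω] with k hk
  exact (hf k ω).resolve_right hk

end Measure

theorem eventually_zero_of_supermartingale_decrement_general
    {Ω : Type*} {m0 : MeasurableSpace Ω} (μ : Measure Ω) [IsProbabilityMeasure μ]
    (ℱ : Filtration ℕ m0)
    (u Δ : ℕ → Ω → ℝ) (c : ℝ) (hc : 0 < c)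
    (hu_nonneg : ∀ k, ∀ ω, 0 ≤ u k ω)
    (hu_int : ∀ k, Integrable (u k) μ)
    (hΔ_adapted : Adapted ℱ Δ)
    (hΔ_vals : ∀ k, ∀ ω, Δ k ω = 0 ∨ Δ k ω = c)
    (hrec : ∀ k, ∀ᵐ ω ∂μ, (μ[u (k + 1) | ℱ k]) ω ≤ u k ω - Δ (k + 1) ω) :
    ∀ᵐ ω ∂μ, ∀ᶠ k in Filter.atTop, Δ k ω = 0 := by
  have hΔ_meas : ∀ k, Measurable (Δ k) := fun k => hΔ_adapted.measurable
  have hΔ_int : ∀ k, Integrable (Δ k) μ := fun k => by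
    rw [eq_indicator_of_eq_zero_or_eq (hΔ_vals k)]
    exact (integrable_const c).indicator (hΔ_meas k (measurableSet_singleton c))
  have hΔ_nonneg : ∀ k, 0 ≤ ∫ ω, Δ k ω ∂μ := fun k =>
    integral_nonneg fun ω => (hΔ_vals k ω).elim ge_of_eq fun h => h ▸ hc.le
  have hsum : Summable fun k => ∫ ω, Δ (k + 1) ω ∂μ :=
    summable_of_le_sub_succ (fun k => hΔ_nonneg (k + 1))
      (fun k => integral_nonneg (hu_nonneg k)) fun k =>
      integral_le_sub_integral_of_condExp_le_sub (ℱ.le k) (hu_int k) (hΔ_int (k + 1)) (hrec k)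
  exact ae_eventually_eq_zero_of_summable_integral hc.ne' hΔ_meas hΔ_vals
    ((summable_nat_add_iff 1).mp hsum)

theorem eventually_zero_of_supermartingale_decrement
    {Ω : Type*} {m0 : MeasurableSpace Ω} (μ : Measure Ω) [IsProbabilityMeasure μ]
    (ℱ : Filtration ℕ m0)
    (u Δ : ℕ → Ω → ℝ) (c : ℝ) (hc : 0 < c)
    (hu_nonneg : ∀ k, ∀ ω, 0 ≤ u k ω)
    (hu_adapted : Adapted ℱ u)
    (hu_int : ∀ k, Integrable (u k) μ)
    (hΔ_adapted : Adapted ℱ Δ)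
    (hΔ_vals : ∀ k, ∀ ω, Δ k ω = 0 ∨ Δ k ω = c)
    (hrec : ∀ k, ∀ᵐ ω ∂μ, (μ[u (k + 1) | ℱ k]) ω ≤ u k ω - Δ (k + 1) ω) :
    ∀ᵐ ω ∂μ, ∀ᶠ k in Filter.atTop, Δ k ω = 0 :=
  eventually_zero_of_supermartingale_decrement_general μ ℱ u Δ c hc hu_nonneg hu_int hΔ_adapted
    hΔ_vals hrec
end
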